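/- Under logistic selection P(R=1|X=x) = logistic(ψ₀+ψ₁x) with X | R=1 ~ N(μ,σ²), the conditional variance of X given R=0 equals σ², i.e., the selection shifts the mean but leaves the variance unchanged. -/

import Mathlib

/-!
Since `1 - logistic t = exp (-t) * logistic t`, the density of `X` given `R = 0` is proportional
to `exp (-(ψ₀ + ψ₁ x))` times the `N(μ, σ²)` density. Completing the square shows that this is the
`N(μ - ψ₁ σ², σ²)` density: the tilt moves the mean and keeps the variance.
-/

open MeasureTheory Real

noncomputable def normalPDF (μ σ2 x : ℝ) : ℝ :=
  (Real.sqrt (2 * Real.pi * σ2))⁻¹ * Real.exp (-(x - μ)^2 / (2 * σ2))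

noncomputable def logisticSel (ψ0 ψ1 x : ℝ) : ℝ :=
  Real.exp (ψ0 + ψ1 * x) / (1 + Real.exp (ψ0 + ψ1 * x))

open ProbabilityTheory
open scoped NNReal

lemma integral_mul_normalPDF (μ : ℝ) {v : ℝ≥0} (hv : v ≠ 0) (g : ℝ → ℝ) :
    ∫ x, g x * normalPDF μ v x = ∫ x, g x ∂gaussianReal μ v := by
  rw [integral_gaussianReal_eq_integral_smul hv]
  simp_rw [smul_eq_mul, mul_comm (g _)]
  rfl

lemma integral_normalPDF (μ : ℝ) {σ2 : ℝ} (hσ2 : 0 < σ2) : ∫ x, normalPDF μ σ2 x = 1 := by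
  lift σ2 to ℝ≥0 using hσ2.le
  simpa using integral_mul_normalPDF μ (by exact_mod_cast hσ2.ne') 1

lemma integral_id_mul_normalPDF (μ : ℝ) {σ2 : ℝ} (hσ2 : 0 < σ2) :
    ∫ x, x * normalPDF μ σ2 x = μ := by
  lift σ2 to ℝ≥0 using hσ2.le
  rw [integral_mul_normalPDF μ (by exact_mod_cast hσ2.ne') fun x ↦ x]
  exact integral_id_gaussianReal

lemma integral_sq_sub_mul_normalPDF (μ : ℝ) {σ2 : ℝ} (hσ2 : 0 < σ2) :
    ∫ x, (x - μ) ^ 2 * normalPDF μ σ2 x = σ2 := by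
  lift σ2 to ℝ≥0 using hσ2.le
  rw [integral_mul_normalPDF μ (by exact_mod_cast hσ2.ne') fun x ↦ (x - μ) ^ 2]
  simpa [variance_eq_integral measurable_id.aemeasurable] using
    variance_id_gaussianReal (μ := μ) (v := σ2)

lemma exp_neg_mul_normalPDF {μ σ2 : ℝ} (hσ2 : σ2 ≠ 0) (a b x : ℝ) :
    exp (-(a + b * x)) * normalPDF μ σ2 x
      = exp (b ^ 2 * σ2 / 2 - b * μ - a) * normalPDF (μ - b * σ2) σ2 x := by
  unfold normalPDF
  rw [mul_left_comm, ← exp_add, mul_left_comm _ _ (exp _), ← exp_add]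
  congr 2
  field_simp
  ring

lemma one_sub_logisticSel (a b x : ℝ) :
    1 - logisticSel a b x = exp (-(a + b * x)) * logisticSel a b x := by
  unfold logisticSel
  rw [exp_neg]
  field_simp
  ring

lemma one_sub_logisticSel_mul_eq {f : ℝ → ℝ} {μ σ2 ψ0 ψ1 P1 : ℝ} (hσ2 : σ2 ≠ 0) (hP1 : P1 ≠ 0)
    (hcond1 : ∀ x, logisticSel ψ0 ψ1 x * f x / P1 = normalPDF μ σ2 x) (x : ℝ) :
    (1 - logisticSel ψ0 ψ1 x) * f x
      = P1 * exp (ψ1 ^ 2 * σ2 / 2 - ψ1 * μ - ψ0) * normalPDF (μ - ψ1 * σ2) σ2 x := by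
  rw [mul_assoc, ← exp_neg_mul_normalPDF hσ2, ← hcond1, one_sub_logisticSel]
  field_simp

theorem missing_part_variance_general
    (f : ℝ → ℝ) (μ σ2 ψ0 ψ1 : ℝ) (hσ2 : 0 < σ2)
    (P1 P0 : ℝ)
    (hP0 : P0 = ∫ x, (1 - logisticSel ψ0 ψ1 x) * f x)
    (hP1pos : 0 < P1)
    (hcond1 : ∀ x, logisticSel ψ0 ψ1 x * f x / P1 = normalPDF μ σ2 x)
    (m0 : ℝ)
    (hm0 : m0 = ∫ x, x * ((1 - logisticSel ψ0 ψ1 x) * f x / P0)) :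
    (∫ x, (x - m0) ^ 2 * ((1 - logisticSel ψ0 ψ1 x) * f x / P0)) = σ2 := by
  have hdens := one_sub_logisticSel_mul_eq hσ2.ne' hP1pos.ne' hcond1
  set c := P1 * exp (ψ1 ^ 2 * σ2 / 2 - ψ1 * μ - ψ0)
  have hc : c ≠ 0 := by positivity
  have hP0c : P0 = c := by
    simp_rw [hP0, hdens, integral_const_mul, integral_normalPDF _ hσ2, mul_one]
  have hcond0 : ∀ x, (1 - logisticSel ψ0 ψ1 x) * f x / P0 = normalPDF (μ - ψ1 * σ2) σ2 x := by
    intro x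
    rw [hdens, hP0c, mul_div_cancel_left₀ _ hc]
  have hm0' : m0 = μ - ψ1 * σ2 := by
    simp_rw [hm0, hcond0, integral_id_mul_normalPDF _ hσ2]
  simp_rw [hcond0, hm0', integral_sq_sub_mul_normalPDF _ hσ2]

/-- under logistic selection with `X|R=1 ~ N(μ,σ²)`, the
conditional variance of `X` given `R=0` is still `σ²`. -/
theorem missing_part_variance
    (f : ℝ → ℝ) (μ σ2 ψ0 ψ1 : ℝ) (hσ2 : 0 < σ2)
    (hf_nonneg : ∀ x, 0 ≤ f x) (hf_meas : Measurable f) (hInt : Integrable f)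
    (P1 P0 : ℝ)
    (hP1 : P1 = ∫ x, logisticSel ψ0 ψ1 x * f x)
    (hP0 : P0 = ∫ x, (1 - logisticSel ψ0 ψ1 x) * f x)
    (hP1pos : 0 < P1) (hP0pos : 0 < P0)
    (hcond1 : ∀ x, logisticSel ψ0 ψ1 x * f x / P1 = normalPDF μ σ2 x)
    (m0 : ℝ)
    (hm0 : m0 = ∫ x, x * ((1 - logisticSel ψ0 ψ1 x) * f x / P0)) :
    (∫ x, (x - m0) ^ 2 * ((1 - logisticSel ψ0 ψ1 x) * f x / P0)) = σ2 :=
  missing_part_variance_general f μ σ2 ψ0 ψ1 hσ2 P1 P0 hP0 hP1pos hcond1 m0 hm0
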